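/- arXiv:math/0606746 — 5 statements merged into one kernel-verified Lean document; each statement's English description precedes it below -/
import Mathlib

section
/- Let M = M(Σ,I) be a free partially commutative monoid. Two elements u, v ∈ M(Σ,I) are equal if and only if π_{a,b}(u) = π_{a,b}(v) for every pair (a,b) in the complement D = Σ×Σ \ I of the commutation relation. -/
open scoped Classical

/-- The elementary commutation relation on words: `ab ~ ba` for `(a,b) ∈ I`. -/
def TraceRel {α : Type*} (I : α → α → Prop) : FreeMonoid α → FreeMonoid α → Prop :=
  fun u v => ∃ a b, I a b ∧ u = FreeMonoid.of a * FreeMonoid.of b ∧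
    v = FreeMonoid.of b * FreeMonoid.of a

/-- The congruence on the free monoid generated by the commutation relation. -/
def TraceCon {α : Type*} (I : α → α → Prop) : Con (FreeMonoid α) := conGen (TraceRel I)

/-- The free partially commutative monoid `M(Σ, I)`: the monoid presented by
generators `Σ` and relations `ab = ba` for `(a,b) ∈ I`. -/
abbrev TraceMonoid (α : Type*) (I : α → α → Prop) : Type _ := (TraceCon I).Quotient

/-- The canonical map `Σ* → M(Σ, I)` sending a word to its class. -/
def TraceMonoid.mk {α : Type*} (I : α → α → Prop) : FreeMonoid α →* TraceMonoid α I :=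
  Con.mk' _

/-- The projection `π_A : M(Σ, I) → M(A, I_A)` erasing all letters not in `A`. -/
noncomputable def TraceMonoid.proj {α : Type*} (I : α → α → Prop) (A : Set α) :
    TraceMonoid α I →* TraceMonoid A (fun a b => I a.1 b.1) :=
  Con.lift _ ((TraceMonoid.mk _).comp (FreeMonoid.lift fun c =>
    if h : c ∈ A then FreeMonoid.of (⟨c, h⟩ : A) else 1)) <| by
    refine Con.conGen_le.2 ?_
    rintro u v ⟨a, b, hI, rfl, rfl⟩
    simp only [Con.ker_rel, map_mul, MonoidHom.comp_apply, FreeMonoid.lift_eval_of]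
    by_cases ha : a ∈ A <;> by_cases hb : b ∈ A <;>
      simp only [ha, hb, dif_pos, dif_neg, not_false_iff, map_one, one_mul, mul_one]
    rw [← map_mul, ← map_mul]
    exact Quotient.sound (ConGen.Rel.of _ _ ⟨⟨a, ha⟩, ⟨b, hb⟩, hI, rfl, rfl⟩)

/-!
A pair `{a, b}` with neither `I a b` nor `I b a` carries no commutation, so
`π_{a,b}(u) = π_{a,b}(v)` says that the words `u` and `v` have the same subword over `{a, b}`.
Now induct on the length of `u`. If `u = a u'`, the pair `(a, a)` shows that `a` occurs in `v`;
write `v = s a t` with `a ∉ s`. For every letter `b` of `s` that does not commute with `a`, the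
projections onto `{a, b}` would start with `a` on one side and with `b` on the other, so `a`
commutes with all of `s` and `v ≡ a s t`. Cancelling `a` leaves `u'` and `s t`, whose projections
still agree, and the induction hypothesis applies.
-/

open FreeMonoid (of ofList)

section

variable {α : Type*} {I : α → α → Prop}

theorem not_rel_of_mem_pair (hirr : Irreflexive I) {a b x y : α} (hab : ¬ I a b)
    (hba : ¬ I b a) (hx : x ∈ ({a, b} : Set α)) (hy : y ∈ ({a, b} : Set α)) : ¬ I x y := by
  rcases hx with rfl | rfl <;> rcases hy with rfl | rfl <;> first | exact hirr _ | assumption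

namespace TraceCon

theorem rel_of_mul_of {a b : α} (h : I a b ∨ I b a) :
    TraceCon I (of a * of b) (of b * of a) := by
  rcases h with h | h
  · exact ConGen.Rel.of _ _ ⟨a, b, h, rfl, rfl⟩
  · exact (TraceCon I).symm (ConGen.Rel.of _ _ ⟨b, a, h, rfl, rfl⟩)

theorem rel_ofList_mul_of {a : α} {s : List α} (h : ∀ b ∈ s, I a b ∨ I b a) :
    TraceCon I (ofList s * of a) (of a * ofList s) := by
  induction s with
  | nil => simpa using (TraceCon I).refl (of a)
  | cons b s ih =>
    rw [FreeMonoid.ofList_cons, mul_assoc, ← mul_assoc (of a)]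
    refine (TraceCon I).trans ((TraceCon I).mul ((TraceCon I).refl (of b))
      (ih fun c hc => h c (.tail _ hc))) ?_
    rw [← mul_assoc]
    exact (TraceCon I).mul (rel_of_mul_of (h b (.head _)).symm) ((TraceCon I).refl _)

theorem eq_bot_of_forall_not_rel (h : ∀ x y, ¬ I x y) : TraceCon I = ⊥ :=
  le_bot_iff.1 <| Con.conGen_le.2 fun _ _ ⟨x, y, hxy, _⟩ => (h x y hxy).elim

theorem rel_ofList_of_filter_eq (hirr : Irreflexive I) {u v : List α}
    (h : ∀ a b, ¬ I a b → ¬ I b a →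
      u.filter (· ∈ ({a, b} : Set α)) = v.filter (· ∈ ({a, b} : Set α))) :
    TraceCon I (ofList u) (ofList v) := by
  induction u generalizing v with
  | nil =>
    suffices v = [] from this ▸ (TraceCon I).refl _
    refine List.eq_nil_iff_forall_not_mem.2 fun c hc => ?_
    have hc' : c ∈ v.filter (· ∈ ({c, c} : Set α)) := List.mem_filter.2 ⟨hc, by simp⟩
    rw [← h c c (hirr c) (hirr c)] at hc'
    simp at hc'
  | cons a u ih =>
    have ha : a ∈ v := by
      have ha' : a ∈ (a :: u).filter (· ∈ ({a, a} : Set α)) := by simp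
      exact (List.mem_filter.1 (h a a (hirr a) (hirr a) ▸ ha')).1
    obtain ⟨s, t, rfl, has⟩ := List.eq_append_cons_of_mem ha
    have hcomm : ∀ b ∈ s, I a b ∨ I b a := by
      intro b hb
      by_contra hab
      rw [not_or] at hab
      have heq := h a b hab.1 hab.2
      rw [List.filter_cons_of_pos (by simp), List.filter_append, List.cons_eq_append_iff] at heq
      rcases heq with ⟨hnil, -⟩ | ⟨s', hs', -⟩
      · exact List.filter_eq_nil_iff.1 hnil b hb (by simp)
      · exact has (List.mem_filter.1 (hs' ▸ List.mem_cons_self : a ∈ _)).1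
    have hrest : ∀ a' b', ¬ I a' b' → ¬ I b' a' →
        u.filter (· ∈ ({a', b'} : Set α)) = (s ++ t).filter (· ∈ ({a', b'} : Set α)) := by
      intro a' b' h₁ h₂
      have heq := h a' b' h₁ h₂
      rw [List.filter_cons, List.filter_append, List.filter_cons] at heq
      rw [List.filter_append]
      by_cases haP : a ∈ ({a', b'} : Set α)
      · have hs : s.filter (· ∈ ({a', b'} : Set α)) = [] :=
            List.filter_eq_nil_iff.2 fun c hc hcP => (hcomm c hc).elim
              (not_rel_of_mem_pair hirr h₁ h₂ haP (by simpa using hcP))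
              (not_rel_of_mem_pair hirr h₁ h₂ (by simpa using hcP) haP)
        rw [hs, List.nil_append, if_pos (decide_eq_true haP), if_pos (decide_eq_true haP)] at heq
        rw [hs, List.nil_append]
        exact (List.cons.inj heq).2
      · rwa [if_neg (by simpa using haP), if_neg (by simpa using haP)] at heq
    have hmove : TraceCon I (of a * ofList (s ++ t)) (ofList (s ++ a :: t)) := by
      rw [FreeMonoid.ofList_append, FreeMonoid.ofList_append, FreeMonoid.ofList_cons,
        ← mul_assoc, ← mul_assoc]
      exact (TraceCon I).mul ((TraceCon I).symm (rel_ofList_mul_of hcomm)) ((TraceCon I).refl _)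
    rw [FreeMonoid.ofList_cons]
    exact (TraceCon I).trans ((TraceCon I).mul ((TraceCon I).refl _) (ih hrest)) hmove

end TraceCon

namespace TraceMonoid

theorem mk_ofList_surjective : Function.Surjective fun l : List α => mk I (ofList l) :=
  Con.mk'_surjective.comp FreeMonoid.ofList.surjective

theorem map_val_lift_ofList (A : Set α) (l : List α) :
    FreeMonoid.map Subtype.val
        (FreeMonoid.lift (fun c => if h : c ∈ A then of (⟨c, h⟩ : A) else 1) (ofList l)) =
      ofList (l.filter (· ∈ A)) := by
  induction l with
  | nil => rfl
  | cons c l ih =>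
    rw [FreeMonoid.ofList_cons, map_mul, map_mul, ih]
    by_cases hc : c ∈ A <;> simp [FreeMonoid.ofList_cons, hc]

theorem filter_eq_of_proj_eq {A : Set α} (hA : ∀ x ∈ A, ∀ y ∈ A, ¬ I x y) {u v : List α}
    (h : proj I A (mk I (ofList u)) = proj I A (mk I (ofList v))) :
    u.filter (· ∈ A) = v.filter (· ∈ A) := by
  have hbot : TraceCon (fun x y : A => I x.1 y.1) = ⊥ :=
    TraceCon.eq_bot_of_forall_not_rel fun x y => hA x x.2 y y.2
  have hlift := (TraceCon _).eq.1 h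
  rw [hbot] at hlift
  have := congrArg (FreeMonoid.map Subtype.val) hlift
  rwa [map_val_lift_ofList, map_val_lift_ofList, ofList.injective.eq_iff] at this

end TraceMonoid

end

theorem projection_lemma_general {σ : Type*} (I : σ → σ → Prop)
    (hirr : Irreflexive I) (u v : TraceMonoid σ I) :
    u = v ↔ ∀ a b : σ, ¬ I a b →
      TraceMonoid.proj I {a, b} u = TraceMonoid.proj I {a, b} v := by
  refine ⟨by rintro rfl _ _ _; rfl, fun h => ?_⟩
  obtain ⟨u, rfl⟩ := TraceMonoid.mk_ofList_surjective u
  obtain ⟨v, rfl⟩ := TraceMonoid.mk_ofList_surjective v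
  refine (TraceCon I).eq.2 (TraceCon.rel_ofList_of_filter_eq hirr fun a b hab hba => ?_)
  simpa using TraceMonoid.filter_eq_of_proj_eq
    (fun x hx y hy => not_rel_of_mem_pair hirr hab hba hx hy) (h a b hab)

/-- **Projection Lemma.** Two elements `u, v ∈ M(Σ, I)` are equal if and only if
`π_{a,b}(u) = π_{a,b}(v)` for every pair `(a, b)` in the complement `D = Σ×Σ \ I`
of the commutation relation. -/
theorem projection_lemma {σ : Type*} [Fintype σ] (I : σ → σ → Prop)
    (hsym : Symmetric I) (hirr : Irreflexive I) (u v : TraceMonoid σ I) :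
    u = v ↔ ∀ a b : σ, ¬ I a b →
      TraceMonoid.proj I {a, b} u = TraceMonoid.proj I {a, b} v :=
  projection_lemma_general I hirr u v
end

section
/- Let M = M(Σ,I) be a free partially commutative monoid and t, u, v, w ∈ M(Σ,I). Then tu = vw if and only if there exist p, q, r, s ∈ M(Σ,I) such that t = pr, u = sq, v = ps, w = rq, with rs = sr and alph(r) ∩ alph(s) = ∅. -/
open scoped Classical

/-- The set of letters occurring in a word. -/
def letterSet {α : Type*} (w : FreeMonoid α) : Set α := {a | a ∈ FreeMonoid.toList w}

theorem letterSet_mul {α : Type*} (u v : FreeMonoid α) :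
    letterSet (u * v) = letterSet u ∪ letterSet v := by
  ext a; simp [letterSet, FreeMonoid.toList_mul]

/-- `alph x`: the set of letters of `Σ` that appear in (any word representing)
the element `x` of `M(Σ, I)`; it is independent of the chosen representative. -/
def alph {α : Type*} (I : α → α → Prop) (x : TraceMonoid α I) : Set α :=
  Con.liftOn x letterSet <| by
    intro a b h
    induction h with
    | of x y h =>
      obtain ⟨a, b, _, rfl, rfl⟩ := h
      rw [letterSet_mul, letterSet_mul]
      exact Set.union_comm _ _
    | refl => rfl
    | symm _ ih => exact ih.symm
    | trans _ _ ih₁ ih₂ => exact ih₁.trans ih₂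
    | mul _ _ ih₁ ih₂ => rw [letterSet_mul, letterSet_mul, ih₁, ih₂]

/-! Induction on `v`. Call `a` minimal in a word if it occurs and every letter before its first
occurrence is independent of `a`; the word is then equivalent to `a` followed by the word with
that occurrence erased, and minimality is invariant under commutations. If `v = a v'`, then `a`
is minimal in `tu`, hence either in `t`, or in `u` with every letter of `t` independent of `a`.
Either way `a` cancels on the left (erasing the first `a` respects commutations), and the
factorization of `t' u = v' w` resp. `t u' = v' w` is extended by `a` in `p` resp. in `s`. -/

namespace TraceMonoid

variable {σ : Type*} {I : σ → σ → Prop}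

def of (I : σ → σ → Prop) (a : σ) : TraceMonoid σ I := mk I (FreeMonoid.of a)

theorem mk_eq_mk_iff {u v : FreeMonoid σ} : mk I u = mk I v ↔ TraceCon I u v := Con.eq _

@[elab_as_elim]
theorem induction_on {motive : TraceMonoid σ I → Prop} (x : TraceMonoid σ I) (one : motive 1)
    (of_mul : ∀ a x, motive x → motive (of I a * x)) : motive x := by
  induction x using Con.induction_on with
  | _ u =>
    induction u using FreeMonoid.inductionOn' with
    | one => exact one
    | of_mul a u ih => exact of_mul a _ ih

theorem of_mul_of_comm {a b : σ} (h : I a b) : of I a * of I b = of I b * of I a :=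
  mk_eq_mk_iff.2 (ConGen.Rel.of _ _ ⟨a, b, h, rfl, rfl⟩)

theorem alph_one : alph I 1 = ∅ :=
  Set.eq_empty_of_forall_notMem fun _ => List.not_mem_nil

theorem alph_of (a : σ) : alph I (of I a) = {a} :=
  Set.ext fun _ => List.mem_singleton

theorem alph_mul (x y : TraceMonoid σ I) : alph I (x * y) = alph I x ∪ alph I y := by
  induction x using Con.induction_on with | _ u =>
  induction y using Con.induction_on with | _ v =>
  exact letterSet_mul u v

theorem mem_toList_iff_of_traceCon {u v : FreeMonoid σ} (h : TraceCon I u v) (a : σ) :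
    a ∈ u.toList ↔ a ∈ v.toList :=
  Set.ext_iff.1 (congrArg (alph I) (mk_eq_mk_iff.2 h)) a

theorem of_mul_comm {a : σ} {x : TraceMonoid σ I} (h : ∀ b ∈ alph I x, I a b) :
    of I a * x = x * of I a := by
  induction x using induction_on with
  | one => rw [one_mul, mul_one]
  | of_mul b x ih =>
    simp only [alph_mul, alph_of, Set.mem_union, Set.mem_singleton_iff, forall_eq_or_imp] at h
    rw [← mul_assoc, of_mul_of_comm h.1, mul_assoc, ih h.2, mul_assoc]

theorem traceCon_erase (a : σ) {u v : FreeMonoid σ} (h : TraceCon I u v) :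
    TraceCon I (.ofList (u.toList.erase a)) (.ofList (v.toList.erase a)) := by
  induction h with
  | of _ _ h =>
    obtain ⟨b, c, hbc, rfl, rfl⟩ := h
    by_cases hb : b = a <;> by_cases hc : c = a <;>
      simp only [hb, hc, FreeMonoid.toList_mul, FreeMonoid.toList_of, List.cons_append,
        List.nil_append, List.erase_cons_head, beq_iff_eq, not_false_eq_true,
        List.erase_cons_tail, List.erase_nil, FreeMonoid.ofList_cons, FreeMonoid.ofList_nil,
        mul_one]
    -- if `a` is `b` or `c`, erasing it leaves the same one-letter word on both sides
    iterate 3 exact (TraceCon I).refl _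
    exact ConGen.Rel.of _ _ ⟨b, c, hbc, rfl, rfl⟩
  | refl => exact (TraceCon I).refl _
  | symm _ ih => exact (TraceCon I).symm ih
  | trans _ _ ih₁ ih₂ => exact (TraceCon I).trans ih₁ ih₂
  | mul h₁ h₂ ih₁ ih₂ =>
    simp only [FreeMonoid.toList_mul, List.erase_append, mem_toList_iff_of_traceCon h₁]
    split_ifs
    · exact (TraceCon I).mul ih₁ h₂
    · exact (TraceCon I).mul h₁ ih₂

noncomputable def erase (a : σ) (x : TraceMonoid σ I) : TraceMonoid σ I :=
  Con.liftOn x (fun u => mk I (.ofList (u.toList.erase a))) fun _ _ h =>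
    mk_eq_mk_iff.2 (traceCon_erase a h)

theorem erase_of_mul (a : σ) (x : TraceMonoid σ I) : erase a (of I a * x) = x := by
  induction x using Con.induction_on with | _ u =>
  show mk I (.ofList ((a :: u.toList).erase a)) = mk I u
  rw [List.erase_cons_head]; rfl

theorem of_mul_left_cancel {a : σ} {x y : TraceMonoid σ I} (h : of I a * x = of I a * y) :
    x = y := by
  simpa only [erase_of_mul] using congrArg (erase a) h

variable (I) in
inductive IsMinimalLetter (a : σ) : List σ → Prop
  | head (w : List σ) : IsMinimalLetter a (a :: w)
  | cons {b : σ} {w : List σ} (hb : b ≠ a) (hab : I a b) (hw : IsMinimalLetter a w) :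
      IsMinimalLetter a (b :: w)

theorem not_isMinimalLetter_nil {a : σ} : ¬IsMinimalLetter I a [] := nofun

theorem isMinimalLetter_cons_iff {a b : σ} {w : List σ} :
    IsMinimalLetter I a (b :: w) ↔ b = a ∨ (b ≠ a ∧ I a b ∧ IsMinimalLetter I a w) := by
  constructor
  · rintro (_ | ⟨hb, hab, hw⟩)
    exacts [Or.inl rfl, Or.inr ⟨hb, hab, hw⟩]
  · rintro (rfl | ⟨hb, hab, hw⟩)
    exacts [.head w, .cons hb hab hw]

theorem isMinimalLetter_append_iff {a : σ} {x y : List σ} :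
    IsMinimalLetter I a (x ++ y) ↔
      IsMinimalLetter I a x ∨ (∀ b ∈ x, b ≠ a ∧ I a b) ∧ IsMinimalLetter I a y := by
  induction x with
  | nil => simp [not_isMinimalLetter_nil]
  | cons b x ih =>
    simp only [List.cons_append, isMinimalLetter_cons_iff, ih, List.forall_mem_cons]
    tauto

theorem isMinimalLetter_iff_of_traceCon [Std.Symm I] (a : σ) {u v : FreeMonoid σ}
    (h : TraceCon I u v) : IsMinimalLetter I a u.toList ↔ IsMinimalLetter I a v.toList := by
  induction h with
  | of _ _ h =>
    obtain ⟨b, c, hbc, rfl, rfl⟩ := h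
    have hcb := symm hbc
    simp only [FreeMonoid.toList_mul, FreeMonoid.toList_of, List.cons_append, List.nil_append,
      isMinimalLetter_cons_iff, not_isMinimalLetter_nil]
    by_cases hb : b = a <;> by_cases hc : c = a <;> subst_vars <;> tauto
  | refl => rfl
  | symm _ ih => exact ih.symm
  | trans _ _ ih₁ ih₂ => exact ih₁.trans ih₂
  | mul h₁ _ ih₁ ih₂ =>
    simp only [FreeMonoid.toList_mul, isMinimalLetter_append_iff, ih₁, ih₂,
      mem_toList_iff_of_traceCon h₁]

theorem IsMinimalLetter.mk_eq {a : σ} {w : List σ} (h : IsMinimalLetter I a w) :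
    mk I (.ofList w) = of I a * erase a (mk I (.ofList w)) := by
  induction h with
  | head w =>
    show _ = _ * mk I (.ofList ((a :: w).erase a))
    rw [List.erase_cons_head]; rfl
  | @cons b w hb hab _ ih =>
    show _ = _ * mk I (.ofList ((b :: w).erase a))
    rw [List.erase_cons_tail (by simpa using hb), FreeMonoid.ofList_cons, map_mul,
      FreeMonoid.ofList_cons, map_mul, ih, ← mul_assoc, ← mul_assoc]
    exact congrArg (· * _) (of_mul_of_comm hab).symm

theorem of_mul_eq_mul_cases [Std.Symm I] {a : σ} {x y z : TraceMonoid σ I}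
    (h : of I a * x = y * z) :
    y = of I a * erase a y ∨ (∀ b ∈ alph I y, b ≠ a ∧ I a b) ∧ z = of I a * erase a z := by
  induction x using Con.induction_on with | _ u =>
  induction y using Con.induction_on with | _ v =>
  induction z using Con.induction_on with | _ w =>
  have hmin : IsMinimalLetter I a (v.toList ++ w.toList) :=
    (isMinimalLetter_iff_of_traceCon a (mk_eq_mk_iff.1 h)).1 (.head u.toList)
  exact (isMinimalLetter_append_iff.1 hmin).imp IsMinimalLetter.mk_eq
    fun ⟨hv, hw⟩ => ⟨hv, hw.mk_eq⟩

theorem exists_factorization_of_mul_eq_mul [Std.Symm I] {t u v w : TraceMonoid σ I}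
    (h : t * u = v * w) : ∃ p q r s : TraceMonoid σ I,
      t = p * r ∧ u = s * q ∧ v = p * s ∧ w = r * q ∧
      r * s = s * r ∧ alph I r ∩ alph I s = ∅ := by
  induction v using induction_on generalizing t u w with
  | one =>
    refine ⟨1, u, t, 1, ?_, ?_, ?_, ?_, ?_, ?_⟩ <;>
      simp_all only [one_mul, mul_one, alph_one, Set.inter_empty]
  | of_mul a v ih =>
    rcases of_mul_eq_mul_cases (x := v * w) (h.trans (mul_assoc _ _ _)).symm with ht | ⟨hta, hu⟩
    · obtain ⟨p, q, r, s, hpr, rfl, rfl, rfl, hrs, hdisj⟩ :=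
        ih (t := erase a t) (u := u) (w := w) <|
          of_mul_left_cancel (by rw [← mul_assoc, ← ht, h, mul_assoc])
      exact ⟨of I a * p, q, r, s, by rw [ht, hpr, mul_assoc], rfl, (mul_assoc _ _ _).symm, rfl,
        hrs, hdisj⟩
    · have hat : of I a * t = t * of I a := of_mul_comm fun b hb => (hta b hb).2
      obtain ⟨p, q, r, s, rfl, hsq, rfl, rfl, hrs, hdisj⟩ :=
        ih (t := t) (u := erase a u) (w := w) <|
          of_mul_left_cancel (by rw [← mul_assoc, hat, mul_assoc, ← hu, h, mul_assoc])
      have hindep : ∀ b ∈ alph I p ∪ alph I r, b ≠ a ∧ I a b := by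
        rwa [← alph_mul]
      have hap : of I a * p = p * of I a :=
        of_mul_comm fun b hb => (hindep b (.inl hb)).2
      have har : of I a * r = r * of I a :=
        of_mul_comm fun b hb => (hindep b (.inr hb)).2
      refine ⟨p, q, r, of I a * s, rfl, by rw [hu, hsq, mul_assoc], ?_, rfl, ?_, ?_⟩
      · rw [← mul_assoc, hap, mul_assoc]
      · rw [← mul_assoc, ← har, mul_assoc, hrs, mul_assoc]
      · rw [alph_mul, alph_of, Set.inter_union_distrib_left, hdisj, Set.union_empty,
          Set.inter_singleton_eq_empty]
        exact fun ha => (hindep a (.inr ha)).1 rfl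

end TraceMonoid

theorem levi_lemma_general {σ : Type*} (I : σ → σ → Prop)
    (hsym : Symmetric I) (t u v w : TraceMonoid σ I) :
    t * u = v * w ↔ ∃ p q r s : TraceMonoid σ I,
      t = p * r ∧ u = s * q ∧ v = p * s ∧ w = r * q ∧
      r * s = s * r ∧ alph I r ∩ alph I s = ∅ := by
  have : Std.Symm I := ⟨hsym⟩
  refine ⟨TraceMonoid.exists_factorization_of_mul_eq_mul, ?_⟩
  rintro ⟨p, q, r, s, rfl, rfl, rfl, rfl, hrs, -⟩
  rw [mul_assoc, ← mul_assoc r, hrs, mul_assoc, ← mul_assoc]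

/-- **Levi's Lemma** for free partially commutative monoids: `tu = vw` iff there exist
`p, q, r, s` with `t = pr`, `u = sq`, `v = ps`, `w = rq`, `rs = sr` and
`alph(r) ∩ alph(s) = ∅`. -/
theorem levi_lemma {σ : Type*} [Fintype σ] (I : σ → σ → Prop)
    (hsym : Symmetric I) (hirr : Irreflexive I) (t u v w : TraceMonoid σ I) :
    t * u = v * w ↔ ∃ p q r s : TraceMonoid σ I,
      t = p * r ∧ u = s * q ∧ v = p * s ∧ w = r * q ∧
      r * s = s * r ∧ alph I r ∩ alph I s = ∅ :=
  levi_lemma_general I hsym t u v w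
end

section
/- Let Σ be a finite totally ordered set and M(Σ,I) a free partially commutative monoid. Every element of M(Σ,I) has a unique Foata normal form; that is, for every nonempty x ∈ M(Σ,I) there exist a unique integer n > 0 and unique nonempty words x_1, …, x_n ∈ Σ* such that x = x_1x_2⋯x_n in M(Σ,I), each x_i is a product of distinct pairwise commuting letters written in increasing order, and for each 1 ≤ i < n and each letter a of x_{i+1} there is a letter b of x_i with (a,b) ∉ I. -/
open scoped Classical

/-!
Foata's algorithm reads a word from left to right and puts each letter `a` into the block
right after the last block that contains a letter not commuting with `a` (into a new last
block if there is none). Inserting two commuting letters in either order gives the same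
result, so the output depends only on the trace of the word. The output is always a Foata
normal form of that trace, and run on the word `x₁x₂⋯xₙ` of a Foata normal form it returns
`x₁, …, xₙ` again; this gives existence and uniqueness.
-/

open List

theorem List.orderedInsert_comm {α : Type*} [LinearOrder α] (a b : α) (l : List α) :
    (l.orderedInsert (· ≤ ·) a).orderedInsert (· ≤ ·) b =
      (l.orderedInsert (· ≤ ·) b).orderedInsert (· ≤ ·) a := by
  induction l with
  | nil =>
    simp only [orderedInsert_nil, orderedInsert_cons]
    split_ifs <;> grind
  | cons c l ih =>
    simp only [orderedInsert_cons]
    split_ifs <;> grind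

theorem List.orderedInsert_eq_append {α : Type*} [LinearOrder α] {a : α} {l : List α}
    (h : ∀ c ∈ l, c < a) : l.orderedInsert (· ≤ ·) a = l ++ [a] := by
  induction l with
  | nil => rfl
  | cons c l ih =>
    rw [orderedInsert_cons, if_neg (not_le.2 (h c mem_cons_self)),
      ih fun x hx => h x (mem_cons_of_mem _ hx), cons_append]

namespace TraceMonoid

variable {α : Type*} {I : α → α → Prop}

variable (I) in
def ofList (l : List α) : TraceMonoid α I := mk I (FreeMonoid.ofList l)

@[simp] theorem ofList_nil : ofList I ([] : List α) = 1 := map_one _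

@[simp] theorem ofList_append (l₁ l₂ : List α) :
    ofList I (l₁ ++ l₂) = ofList I l₁ * ofList I l₂ := by
  rw [ofList, FreeMonoid.ofList_append, map_mul]
  rfl

theorem ofList_cons (a : α) (l : List α) : ofList I (a :: l) = ofList I [a] * ofList I l :=
  ofList_append [a] l

theorem prod_map_ofList (L : List (List α)) : (L.map (ofList I)).prod = ofList I L.flatten := by
  induction L with
  | nil => simp
  | cons w L ih => simp [ih]

theorem ofList_surjective : Function.Surjective (ofList I) :=
  fun x => (Con.mk'_surjective x).imp fun _ hu => hu

theorem commute_ofList_singleton {a b : α} (h : I a b) :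
    Commute (ofList I [a]) (ofList I [b]) :=
  (Con.eq _).2 (ConGen.Rel.of _ _ ⟨a, b, h, rfl, rfl⟩)

theorem commute_ofList_of_forall {a : α} {l : List α} (h : ∀ c ∈ l, I a c) :
    Commute (ofList I [a]) (ofList I l) := by
  induction l with
  | nil => exact Commute.one_right _
  | cons c l ih =>
    rw [ofList_cons]
    exact (commute_ofList_singleton (h c mem_cons_self)).mul_right
      (ih fun x hx => h x (mem_cons_of_mem _ hx))

end TraceMonoid

namespace Foata

open TraceMonoid

variable {σ : Type*} [LinearOrder σ] (I : σ → σ → Prop)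

def IsBlock (w : List σ) : Prop :=
  w ≠ [] ∧ w.IsChain (· < ·) ∧ ∀ a ∈ w, ∀ b ∈ w, a ≠ b → I a b

/-- Every letter of `v` fails to commute with some letter of `u`. -/
def Blocks (u v : List σ) : Prop := ∀ a ∈ v, ∃ b ∈ u, ¬ I a b

def IsForm (F : List (List σ)) : Prop := (∀ w ∈ F, IsBlock I w) ∧ F.IsChain (Blocks I)

noncomputable def insertLetter (a : σ) : List (List σ) → List (List σ)
  | [] => [[a]]
  | w :: F =>
    if ∀ c ∈ w ++ F.flatten, I a c then w.orderedInsert (· ≤ ·) a :: F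
    else w :: insertLetter a F

noncomputable def insertAll (F : List (List σ)) (u : List σ) : List (List σ) :=
  u.foldl (fun G a => insertLetter I a G) F

variable {I}

theorem insertAll_cons (F : List (List σ)) (a : σ) (u : List σ) :
    insertAll I F (a :: u) = insertAll I (insertLetter I a F) u := rfl

theorem insertAll_append (F : List (List σ)) (u v : List σ) :
    insertAll I F (u ++ v) = insertAll I (insertAll I F u) v := foldl_append

theorem insertLetter_cons_of_forall {a : σ} {w : List σ} {F : List (List σ)}
    (h : ∀ c ∈ w ++ F.flatten, I a c) :
    insertLetter I a (w :: F) = w.orderedInsert (· ≤ ·) a :: F := if_pos h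

theorem insertLetter_cons_of_not_forall {a : σ} {w : List σ} {F : List (List σ)}
    (h : ¬ ∀ c ∈ w ++ F.flatten, I a c) :
    insertLetter I a (w :: F) = w :: insertLetter I a F := if_neg h

theorem flatten_insertLetter_perm (a : σ) (F : List (List σ)) :
    (insertLetter I a F).flatten ~ a :: F.flatten := by
  induction F with
  | nil => simp [insertLetter]
  | cons w F ih =>
    by_cases h : ∀ c ∈ w ++ F.flatten, I a c
    · rw [insertLetter_cons_of_forall h, flatten_cons, flatten_cons]
      exact (perm_orderedInsert _ a w).append_right _
    · rw [insertLetter_cons_of_not_forall h, flatten_cons, flatten_cons]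
      exact (ih.append_left w).trans perm_middle

@[simp] theorem mem_flatten_insertLetter {a c : σ} {F : List (List σ)} :
    c ∈ (insertLetter I a F).flatten ↔ c = a ∨ c ∈ F.flatten := by
  rw [(flatten_insertLetter_perm a F).mem_iff, mem_cons]

theorem forall_mem_append_flatten_insertLetter {a b : σ} {w : List σ} {F : List (List σ)} :
    (∀ c ∈ w ++ (insertLetter I b F).flatten, I a c) ↔
      I a b ∧ ∀ c ∈ w ++ F.flatten, I a c := by
  simp only [mem_append, mem_flatten_insertLetter]
  grind

theorem forall_mem_orderedInsert_append {a b : σ} {w : List σ} {F : List (List σ)} :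
    (∀ c ∈ w.orderedInsert (· ≤ ·) b ++ F.flatten, I a c) ↔
      I a b ∧ ∀ c ∈ w ++ F.flatten, I a c := by
  simp only [mem_append, mem_orderedInsert]
  grind

theorem insertLetter_comm [Std.Symm I] {a b : σ} (hab : I a b) (F : List (List σ)) :
    insertLetter I a (insertLetter I b F) = insertLetter I b (insertLetter I a F) := by
  induction F with
  | nil =>
    simp only [insertLetter, flatten_nil, append_nil, mem_singleton, forall_eq, hab, symm_of I hab,
      if_true]
    exact congrArg ([·]) (orderedInsert_comm a b []).symm
  | cons w F ih =>
    by_cases ha : ∀ c ∈ w ++ F.flatten, I a c <;> by_cases hb : ∀ c ∈ w ++ F.flatten, I b c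
    · rw [insertLetter_cons_of_forall hb, insertLetter_cons_of_forall ha,
        insertLetter_cons_of_forall (forall_mem_orderedInsert_append.2 ⟨hab, ha⟩),
        insertLetter_cons_of_forall (forall_mem_orderedInsert_append.2 ⟨symm_of I hab, hb⟩),
        orderedInsert_comm]
    · rw [insertLetter_cons_of_not_forall hb, insertLetter_cons_of_forall ha,
        insertLetter_cons_of_forall (forall_mem_append_flatten_insertLetter.2 ⟨hab, ha⟩),
        insertLetter_cons_of_not_forall fun h => hb (forall_mem_orderedInsert_append.1 h).2]
    · rw [insertLetter_cons_of_not_forall ha, insertLetter_cons_of_forall hb,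
        insertLetter_cons_of_forall
          (forall_mem_append_flatten_insertLetter.2 ⟨symm_of I hab, hb⟩),
        insertLetter_cons_of_not_forall fun h => ha (forall_mem_orderedInsert_append.1 h).2]
    · rw [insertLetter_cons_of_not_forall ha, insertLetter_cons_of_not_forall hb,
        insertLetter_cons_of_not_forall fun h => ha (forall_mem_append_flatten_insertLetter.1 h).2,
        insertLetter_cons_of_not_forall fun h => hb (forall_mem_append_flatten_insertLetter.1 h).2,
        ih]

variable (I) in
def insertAllCon : Con (FreeMonoid σ) where
  r u v := ∀ F, insertAll I F u.toList = insertAll I F v.toList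
  iseqv := ⟨fun _ _ => rfl, fun h F => (h F).symm, fun h₁ h₂ F => (h₁ F).trans (h₂ F)⟩
  mul' h₁ h₂ F := by simp only [FreeMonoid.toList_mul, insertAll_append, h₁ F, h₂ _]

theorem traceCon_le_insertAllCon [Std.Symm I] : TraceCon I ≤ insertAllCon I := by
  refine Con.conGen_le.2 ?_
  rintro _ _ ⟨a, b, hab, rfl, rfl⟩ F
  exact (insertLetter_comm hab F).symm

theorem insertAll_eq_of_ofList_eq [Std.Symm I] {l l' : List σ}
    (h : ofList I l = ofList I l') (F : List (List σ)) : insertAll I F l = insertAll I F l' :=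
  traceCon_le_insertAllCon ((Con.eq _).1 h) F

theorem ofList_flatten_insertLetter (a : σ) (F : List (List σ)) :
    ofList I (insertLetter I a F).flatten = ofList I F.flatten * ofList I [a] := by
  induction F with
  | nil => simp [insertLetter]
  | cons w F ih =>
    by_cases h : ∀ c ∈ w ++ F.flatten, I a c
    · obtain ⟨t, d, hw, hins⟩ :
          ∃ t d, w = t ++ d ∧ w.orderedInsert (· ≤ ·) a = t ++ a :: d :=
        ⟨_, _, takeWhile_append_dropWhile.symm, orderedInsert_eq_take_drop _ _ _⟩
      have hcomm : Commute (ofList I [a]) (ofList I (d ++ F.flatten)) :=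
        commute_ofList_of_forall fun c hc => h c (by simp only [hw, mem_append] at hc ⊢; tauto)
      rw [insertLetter_cons_of_forall h, flatten_cons, flatten_cons, hins, hw, append_assoc,
        append_assoc, cons_append, ofList_append, ofList_cons, hcomm.eq, ← mul_assoc,
        ← ofList_append]
    · rw [insertLetter_cons_of_not_forall h, flatten_cons, flatten_cons, ofList_append, ih,
        ofList_append, mul_assoc]

theorem ofList_flatten_insertAll (F : List (List σ)) (u : List σ) :
    ofList I (insertAll I F u).flatten = ofList I F.flatten * ofList I u := by
  induction u generalizing F with
  | nil => simp [insertAll]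
  | cons a u ih =>
    rw [insertAll_cons, ih, ofList_flatten_insertLetter, ofList_cons a u, mul_assoc]

theorem isForm_nil : IsForm I [] := ⟨by simp, isChain_nil⟩

theorem isForm_cons {w : List σ} {F : List (List σ)} :
    IsForm I (w :: F) ↔ IsBlock I w ∧ (∀ v ∈ F.head?, Blocks I w v) ∧ IsForm I F := by
  simp only [IsForm, forall_mem_cons, isChain_cons]
  tauto

theorem isForm_append_singleton {F : List (List σ)} {w : List σ} :
    IsForm I (F ++ [w]) ↔ IsForm I F ∧ IsBlock I w ∧ ∀ v ∈ F.getLast?, Blocks I v w := by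
  simp only [IsForm, forall_mem_append, forall_mem_singleton, isChain_append, isChain_singleton,
    head?_cons, Option.mem_some_iff, forall_eq']
  tauto

theorem isBlock_singleton (a : σ) : IsBlock I [a] :=
  ⟨cons_ne_nil _ _, isChain_singleton _, by simp⟩

theorem isBlock_orderedInsert [Std.Symm I] [Std.Irrefl I] {a : σ} {w : List σ}
    (hw : IsBlock I w) (ha : ∀ c ∈ w, I a c) : IsBlock I (w.orderedInsert (· ≤ ·) a) := by
  obtain ⟨-, hsorted, hcomm⟩ := hw
  have hperm := perm_orderedInsert (· ≤ ·) a w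
  have hnodup : (w.orderedInsert (· ≤ ·) a).Nodup :=
    hperm.nodup_iff.2 (nodup_cons.2 ⟨fun h => irrefl_of I a (ha a h), hsorted.pairwise.nodup⟩)
  refine ⟨fun h => by simpa [h] using hperm.length_eq, ?_, ?_⟩
  · have hle : (w.orderedInsert (· ≤ ·) a).Pairwise (· ≤ ·) :=
      (hsorted.pairwise.imp le_of_lt).orderedInsert a w
    exact isChain_iff_pairwise.2
      ((pairwise_and_iff.2 ⟨hle, hnodup⟩).imp fun h => h.1.lt_of_ne h.2)
  · simp only [mem_orderedInsert]
    rintro x (rfl | hx) y (rfl | hy) hxy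
    exacts [absurd rfl hxy, ha y hy, symm_of I (ha x hx), hcomm x hx y hy hxy]

theorem blocks_head?_insertLetter {a : σ} {w : List σ} {F : List (List σ)}
    (hF : ∀ v ∈ F.head?, Blocks I w v) (ha : ¬ ∀ c ∈ w ++ F.flatten, I a c) :
    ∀ v ∈ (insertLetter I a F).head?, Blocks I w v := by
  cases F with
  | nil =>
    simp only [insertLetter, head?_cons, Option.mem_some_iff, forall_eq', Blocks, mem_singleton,
      forall_eq]
    simpa using ha
  | cons w' F =>
    simp only [head?_cons, Option.mem_some_iff, forall_eq'] at hF
    by_cases h : ∀ c ∈ w' ++ F.flatten, I a c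
    · rw [insertLetter_cons_of_forall h]
      rintro _ ⟨⟩ c hc
      rcases (mem_orderedInsert _).1 hc with rfl | hc
      · obtain ⟨b, hb, hcb⟩ := not_forall₂.1 ha
        rw [flatten_cons, mem_append] at hb
        exact ⟨b, hb.resolve_right fun hb => hcb (h b hb), hcb⟩
      · exact hF c hc
    · rw [insertLetter_cons_of_not_forall h]
      rintro _ ⟨⟩
      exact hF

theorem isForm_insertLetter [Std.Symm I] [Std.Irrefl I] (a : σ)
    {F : List (List σ)} (hF : IsForm I F) : IsForm I (insertLetter I a F) := by
  induction F with
  | nil => exact ⟨by simpa [insertLetter] using isBlock_singleton a, isChain_singleton _⟩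
  | cons w F ih =>
    obtain ⟨hw, hhead, hF⟩ := isForm_cons.1 hF
    by_cases h : ∀ c ∈ w ++ F.flatten, I a c
    · rw [insertLetter_cons_of_forall h]
      refine isForm_cons.2 ⟨isBlock_orderedInsert hw fun c hc => h c
        (mem_append_left _ hc), fun v hv c hc => ?_, hF⟩
      obtain ⟨b, hb, hcb⟩ := hhead v hv c hc
      exact ⟨b, (mem_orderedInsert _).2 (Or.inr hb), hcb⟩
    · rw [insertLetter_cons_of_not_forall h]
      exact isForm_cons.2 ⟨hw, blocks_head?_insertLetter hhead h, ih hF⟩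

theorem isForm_insertAll [Std.Symm I] [Std.Irrefl I] {F : List (List σ)}
    (hF : IsForm I F) (u : List σ) : IsForm I (insertAll I F u) := by
  induction u generalizing F with
  | nil => exact hF
  | cons a u ih => exact ih (isForm_insertLetter a hF)

theorem insertLetter_append_cons {a : σ} {g : List σ} (hg : ∃ c ∈ g, ¬ I a c)
    (G H : List (List σ)) : insertLetter I a (G ++ g :: H) = G ++ g :: insertLetter I a H := by
  obtain ⟨c, hc, hac⟩ := hg
  induction G with
  | nil => exact insertLetter_cons_of_not_forall fun h => hac (h c (mem_append_left _ hc))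
  | cons g' G ih =>
    rw [cons_append, insertLetter_cons_of_not_forall, ih, cons_append]
    exact fun h => hac (h c (by simp [hc]))

theorem insertAll_append_cons {u g : List σ} (hu : Blocks I g u) (G H : List (List σ)) :
    insertAll I (G ++ g :: H) u = G ++ g :: insertAll I H u := by
  induction u generalizing H with
  | nil => rfl
  | cons a u ih =>
    rw [insertAll_cons, insertLetter_append_cons (hu a mem_cons_self),
      ih (fun b hb => hu b (mem_cons_of_mem _ hb)), insertAll_cons]

theorem insertAll_singleton {p u : List σ} (hsorted : (p ++ u).Pairwise (· < ·))
    (hcomm : ∀ a ∈ p ++ u, ∀ b ∈ p ++ u, a ≠ b → I a b) :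
    insertAll I [p] u = [p ++ u] := by
  induction u generalizing p with
  | nil => simp [insertAll]
  | cons a u ih =>
    have hlt : ∀ c ∈ p, c < a := fun c hc =>
      (pairwise_append.1 hsorted).2.2 c hc a mem_cons_self
    have hI : ∀ c ∈ p, I a c := fun c hc =>
      hcomm a (by simp) c (mem_append_left _ hc) (hlt c hc).ne'
    rw [insertAll_cons, insertLetter_cons_of_forall (by simpa using hI),
      orderedInsert_eq_append hlt, ih (by simpa using hsorted) (by simpa using hcomm),
      append_assoc, singleton_append]

theorem insertAll_nil_of_isBlock {w : List σ} (hw : IsBlock I w) : insertAll I [] w = [w] := by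
  obtain ⟨hne, hsorted, hcomm⟩ := hw
  obtain ⟨a, t, rfl⟩ := exists_cons_of_ne_nil hne
  exact insertAll_singleton (p := [a]) hsorted.pairwise hcomm

theorem insertAll_nil_flatten {F : List (List σ)} (hF : IsForm I F) :
    insertAll I [] F.flatten = F := by
  induction F using List.reverseRecOn with
  | nil => rfl
  | append_singleton M w ih =>
    obtain ⟨hM, hw, hlast⟩ := isForm_append_singleton.1 hF
    rw [flatten_append, flatten_singleton, insertAll_append, ih hM]
    rcases M.eq_nil_or_concat' with rfl | ⟨M', g, rfl⟩
    · exact insertAll_nil_of_isBlock hw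
    · rw [insertAll_append_cons (hlast g (by simp)), insertAll_nil_of_isBlock hw, append_assoc,
        singleton_append]

end Foata

open Foata TraceMonoid

theorem foata_normal_form_general {σ : Type*} [LinearOrder σ] (I : σ → σ → Prop)
    (hsym : Symmetric I) (hirr : Irreflexive I) (x : TraceMonoid σ I) (hx : x ≠ 1) :
    ∃! L : List (List σ),
      (L ≠ [] ∧
        (∀ w ∈ L, w ≠ [] ∧ w.Chain' (· < ·) ∧ ∀ a ∈ w, ∀ b ∈ w, a ≠ b → I a b) ∧
        (∀ (i : ℕ) (h : i + 1 < L.length), ∀ a ∈ L[i+1]'h,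
          ∃ b ∈ L[i]'(Nat.lt_of_succ_lt h), ¬ I a b)) ∧
      (L.map fun w => TraceMonoid.mk I (FreeMonoid.ofList w)).prod = x := by
  have : Std.Symm I := ⟨fun _ _ h => hsym h⟩
  have : Std.Irrefl I := ⟨hirr⟩
  obtain ⟨l, rfl⟩ := ofList_surjective x
  have hform : IsForm I (insertAll I [] l) := isForm_insertAll isForm_nil l
  have hclass : ofList I (insertAll I [] l).flatten = ofList I l := by
    simpa using ofList_flatten_insertAll (I := I) [] l
  refine ⟨insertAll I [] l,
    ⟨⟨fun h => hx ?_, hform.1, isChain_iff_getElem.1 hform.2⟩, ?_⟩, ?_⟩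
  · rw [← hclass, h, flatten_nil, ofList_nil]
  · exact (prod_map_ofList _).trans hclass
  · rintro L ⟨⟨-, hblocks, hchain⟩, hL⟩
    have hLform : IsForm I L := ⟨hblocks, isChain_iff_getElem.2 hchain⟩
    rw [← insertAll_nil_flatten hLform]
    exact insertAll_eq_of_ofList_eq ((prod_map_ofList L).symm.trans hL) []

/-- **Existence and uniqueness of the Foata normal form.** For every nonempty element `x`
of `M(Σ, I)` (with `Σ` finite totally ordered) there is a unique nonempty list of words
`x₁, …, xₙ` such that `x = x₁x₂⋯xₙ` in `M(Σ,I)`, each `xᵢ` is a nonempty product of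
distinct pairwise commuting letters written in (strictly) increasing order, and for each
`i < n` and each letter `a` of `x_{i+1}` there is a letter `b` of `xᵢ` with `(a,b) ∉ I`. -/
theorem foata_normal_form {σ : Type*} [Fintype σ] [LinearOrder σ] (I : σ → σ → Prop)
    (hsym : Symmetric I) (hirr : Irreflexive I) (x : TraceMonoid σ I) (hx : x ≠ 1) :
    ∃! L : List (List σ),
      (L ≠ [] ∧
        (∀ w ∈ L, w ≠ [] ∧ w.Chain' (· < ·) ∧ ∀ a ∈ w, ∀ b ∈ w, a ≠ b → I a b) ∧
        (∀ (i : ℕ) (h : i + 1 < L.length), ∀ a ∈ L[i+1]'h,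
          ∃ b ∈ L[i]'(Nat.lt_of_succ_lt h), ¬ I a b)) ∧
      (L.map fun w => TraceMonoid.mk I (FreeMonoid.ofList w)).prod = x :=
  foata_normal_form_general I hsym hirr x hx
end

section
/- Let M = ⟨a⟩ be the infinite cyclic (free) monoid on one generator a (isomorphic to (ℕ,+)) and let M_0 = {1, a², a³, …, aⁿ, …} be the submonoid of M consisting of the identity and all powers aⁿ with n ≥ 2. Then the monoid ring ℤM is not a free ℤM_0-module (with respect to the module structure induced by the inclusion ℤM_0 ⊆ ℤM). -/
/-!
Write `A = ℤM`, `R = ℤM₀ ⊆ A` and `X = a`. Since `X² · A ⊆ R` and `X²` is a nonzerodivisor,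
any two elements `x, y` of `A` satisfy the nontrivial relation `(X²y) • x = (X²x) • y` over `R`,
so a basis of `A` over `R` has at most one element. A basis `{e}` forces `R = A`: writing
`1 = r e` and `x e = s e` with `r, s ∈ R`, we get `x = x r e = r s e = s`. But `X ∉ R`.
-/

/-- The submonoid `M₀ = {1, a², a³, …}` of the infinite cyclic monoid `M = ⟨a⟩`
(written here as `Multiplicative ℕ`): under the isomorphism with `(ℕ, +)` it is
`{0} ∪ {n : ℕ | n ≥ 2}`, i.e. everything except `a¹`. -/
def cyclicSubmonoid : Submonoid (Multiplicative ℕ) where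
  carrier := {x | Multiplicative.toAdd x ≠ 1}
  one_mem' := by simp
  mul_mem' := by
    intro a b ha hb
    simp only [Set.mem_setOf_eq, toAdd_mul] at *
    omega

open MonoidAlgebra

namespace Module.Basis

variable {ι R A : Type*} [CommRing R] [CommRing A] [Algebra R A]

theorem subsingleton_index_of_mul_mem_range [Nontrivial R] (b : Basis ι R A) {t : A}
    (ht : t ∈ nonZeroDivisors A) (htA : ∀ x, t * x ∈ Set.range (algebraMap R A)) :
    Subsingleton ι := by
  choose g hg using htA
  refine ⟨fun i j => by_contra fun hij => b.ne_zero j ?_⟩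
  have hdep : g (b j) • b i = g (b i) • b j := by
    simp only [Algebra.smul_def, hg]
    ring
  have hgj : g (b j) = 0 := by simpa [Ne.symm hij] using congr(b.repr $hdep i)
  have : t * b j = 0 := by rw [← hg, hgj, map_zero]
  exact (mem_nonZeroDivisors_iff.mp ht).1 _ this

theorem algebraMap_surjective_of_subsingleton [Subsingleton ι] (b : Basis ι R A) :
    Function.Surjective (algebraMap R A) := by
  intro x
  rcases isEmpty_or_nonempty ι with hι | hι
  · have : Subsingleton A := b.repr.toEquiv.subsingleton
    exact ⟨0, Subsingleton.elim _ _⟩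
  have : Unique ι := uniqueOfSubsingleton hι.some
  have hspan (y : A) : algebraMap R A (b.repr y default) * b default = y := by
    simpa [Algebra.smul_def] using b.sum_repr y
  refine ⟨b.repr (x * b default) default, ?_⟩
  linear_combination (x - algebraMap R A (b.repr (x * b default) default)) * hspan 1
    + algebraMap R A (b.repr 1 default) * hspan (x * b default)

end Module.Basis

theorem MonoidAlgebra.mem_range_mapDomainRingHom_subtype {k M : Type*} [CommSemiring k]
    [Monoid M] (S : Submonoid M) (x : MonoidAlgebra k M) :
    x ∈ Set.range (mapDomainRingHom k S.subtype) ↔ ∀ m ∉ S, x.coeff m = 0 := by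
  constructor
  · rintro ⟨y, rfl⟩ m hm
    exact Finsupp.mapDomain_of_notMem_range _ _ (by simpa using hm)
  · intro h
    refine ⟨comapDomain _ Subtype.val_injective x, mapDomain_comapDomain (fun m hm => ?_) _⟩
    by_contra hS
    exact Finsupp.mem_support_iff.mp hm (h m (by simpa using hS))

theorem mem_cyclicSubmonoid {x : Multiplicative ℕ} : x ∈ cyclicSubmonoid ↔ x ≠ .ofAdd 1 :=
  not_congr Multiplicative.toAdd.eq_symm_apply.symm

namespace cyclicSubmonoid

theorem single_ofAdd_one_notMem_range :
    single (.ofAdd 1) 1 ∉ Set.range (mapDomainRingHom ℤ cyclicSubmonoid.subtype) := by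
  rw [mem_range_mapDomainRingHom_subtype]
  exact fun h => one_ne_zero (α := ℤ) (by simpa using h (.ofAdd 1) (by simp [mem_cyclicSubmonoid]))

theorem single_ofAdd_two_mul_mem_range (x : MonoidAlgebra ℤ (Multiplicative ℕ)) :
    single (.ofAdd 2) 1 * x ∈ Set.range (mapDomainRingHom ℤ cyclicSubmonoid.subtype) := by
  rw [mem_range_mapDomainRingHom_subtype]
  intro m hm
  rw [mem_cyclicSubmonoid, not_not] at hm
  subst hm
  refine coeff_single_mul_of_forall_mul_ne _ _ fun d hd => ?_
  have := congr(Multiplicative.toAdd $hd)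
  simp only [toAdd_mul, toAdd_ofAdd] at this
  omega

end cyclicSubmonoid

/-- The monoid ring `ℤM` of the infinite cyclic monoid `M = ⟨a⟩` is **not** a free
module over the monoid ring `ℤM₀` of the submonoid `M₀ = {1, a², a³, …}`, with respect
to the module structure induced by the inclusion `ℤM₀ ⊆ ℤM`. -/
theorem monoidAlgebra_cyclic_not_free_over_submonoid :
    ¬ @Module.Free (MonoidAlgebra ℤ cyclicSubmonoid)
      (MonoidAlgebra ℤ (Multiplicative ℕ)) _ _
      (Module.compHom _ (MonoidAlgebra.mapDomainRingHom ℤ cyclicSubmonoid.subtype)) := by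
  -- its module structure is definitionally the one in the statement
  let := (mapDomainRingHom ℤ cyclicSubmonoid.subtype).toAlgebra
  rintro ⟨⟨ι, b⟩⟩
  have : Subsingleton ι := b.subsingleton_index_of_mul_mem_range
    (mem_nonZeroDivisors_of_ne_zero (single_ne_zero.mpr one_ne_zero))
    cyclicSubmonoid.single_ofAdd_two_mul_mem_range
  exact cyclicSubmonoid.single_ofAdd_one_notMem_range (b.algebraMap_surjective_of_subsingleton _)
end

section
/- Let M = M(Σ,I) be a free partially commutative monoid with Σ finite and totally ordered. Then for every k ≥ 2 the composite δ_{k−1} ∘ δ_k : F_k → F_{k−2} is zero, and ε ∘ δ_1 = 0; i.e., the sequence of modules F_k with the maps δ_k and augmentation ε is a chain complex. -/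
open scoped Classical

noncomputable section Resolution

variable {σ : Type*} [LinearOrder σ]

/-- The monoid ring `ℤM` of the free partially commutative monoid `M = M(Σ, I)`. -/
abbrev RM (σ : Type*) (I : σ → σ → Prop) : Type _ := MonoidAlgebra ℤ (TraceMonoid σ I)

/-- The image of a generator `a ∈ Σ` in the monoid ring `ℤM`. -/
def gen (I : σ → σ → Prop) (a : σ) : RM σ I :=
  MonoidAlgebra.of ℤ (TraceMonoid σ I) (TraceMonoid.mk I (FreeMonoid.of a))

/-- A `k`-clique: a set of `k` distinct pairwise commuting letters of `Σ`
(a complete subgraph with `k` vertices of the graph `Γ(M)`). -/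
def Clique (I : σ → σ → Prop) (k : ℕ) : Type _ :=
  {s : Finset σ // s.card = k ∧ (↑s : Set σ).Pairwise I}

/-- `elt c j` is the element `a_{j+1}` of the clique `{a₁ < a₂ < ⋯ < a_k}`. -/
def elt {I : σ → σ → Prop} {k : ℕ} (c : Clique I k) (j : Fin k) : σ :=
  (c.1.orderIsoOfFin c.2.1 j : σ)

theorem elt_mem {I : σ → σ → Prop} {k : ℕ} (c : Clique I k) (j : Fin k) :
    elt c j ∈ c.1 := (c.1.orderIsoOfFin c.2.1 j).2

/-- The clique obtained by deleting the `(j+1)`-st element. -/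
def erased {I : σ → σ → Prop} {k : ℕ} (c : Clique I (k + 1)) (j : Fin (k + 1)) :
    Clique I k :=
  ⟨c.1.erase (elt c j), by
    refine ⟨?_, ?_⟩
    · rw [Finset.card_erase_of_mem (elt_mem c j), c.2.1]
      omega
    · exact Set.Pairwise.mono (by
        intro a ha
        exact Finset.mem_of_mem_erase (by exact_mod_cast ha)) c.2.2⟩

/-- `F_k`, the free right `ℤM`-module with one basis element for each `k`-clique. -/
abbrev F (I : σ → σ → Prop) (k : ℕ) : Type _ := Clique I k →₀ RM σ I

/-- The boundary homomorphism `δ_{k+1} : F_{k+1} → F_k` of right `ℤM`-modules,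
`δ [a₁…a_{k+1}] = Σⱼ (−1)^{j-1} [a₁… â_j …a_{k+1}] (a_j − 1)`. -/
def del (I : σ → σ → Prop) (k : ℕ) : F I (k + 1) →ₗ[(RM σ I)ᵐᵒᵖ] F I k :=
  Finsupp.lsum ℕ fun c => ∑ j : Fin (k + 1),
    (Finsupp.lsingle (erased c j)).comp
      (LinearMap.mulLeft (RM σ I)ᵐᵒᵖ ((-1 : RM σ I) ^ (j : ℕ) * (gen I (elt c j) - 1)))

/-- The empty clique. -/
def emptyClique (I : σ → σ → Prop) : Clique I 0 := ⟨∅, by simp⟩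

/-- The augmentation `ε : F₀ = ℤM → ℤ`, `ε(a) = 1` for every `a ∈ Σ`
(`F₀` is the free module on the single `0`-clique, canonically `ℤM` itself). -/
def aug (I : σ → σ → Prop) : F I 0 → ℤ := fun x =>
  MonoidAlgebra.lift ℤ ℤ (TraceMonoid σ I) 1 (x (emptyClique I))

end Resolution

/-!
In `δ_{k-1} δ_k [a₁…a_k]` every clique with two letters `a_p ≠ a_q` removed arises twice, once
for each order of removal, with coefficients `±(a_p - 1)(a_q - 1)` and `∓(a_q - 1)(a_p - 1)`:
the signs are opposite because the positions of the two letters shift by one between the two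
orders, and the products agree because the letters of a clique commute in `M`. Pairing the terms
by the involution `(j, i) ↦ (j.succAbove i, i.predAbove j)` cancels everything. Finally
`ε(a - 1) = 0` gives `ε ∘ δ₁ = 0`.
-/

namespace Fin

theorem sum_sum_eq_zero_of_add_succAbove_predAbove_eq_zero {M : Type*} [AddCommMonoid M]
    {n : ℕ} (f : Fin (n + 2) → Fin (n + 1) → M)
    (hf : ∀ j i, f j i + f (j.succAbove i) (i.predAbove j) = 0) :
    ∑ j, ∑ i, f j i = 0 := by
  rw [← Finset.sum_product']
  refine Finset.sum_involution (fun p _ => (p.1.succAbove p.2, p.2.predAbove p.1))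
    (fun p _ => hf p.1 p.2) (fun p _ _ h => p.1.succAbove_ne p.2 (congrArg Prod.fst h))
    (fun _ _ => Finset.mem_univ _) fun p _ => ?_
  exact Prod.ext (succAbove_succAbove_predAbove p.1 p.2) (predAbove_predAbove_succAbove p.1 p.2)

end Fin

theorem neg_one_pow_mul_mul_add_eq_zero {R : Type*} [Ring R] {x y : R} (hxy : Commute x y)
    {a b a' b' : ℕ} (hsign : (-1 : R) ^ (b' + a') = -(-1) ^ (b + a)) (r : R) :
    (-1) ^ a * x * ((-1) ^ b * y * r) + (-1) ^ a' * y * ((-1) ^ b' * x * r) = 0 := by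
  have collect : ∀ (m n : ℕ) (u v : R),
      (-1) ^ m * u * ((-1) ^ n * v * r) = (-1) ^ (n + m) * (u * v * r) := fun m n u v => by
    simp only [mul_assoc]
    rw [((Commute.neg_one_right u).pow_right n).left_comm, ← mul_assoc, ← pow_add, add_comm m n]
  rw [collect, collect, hsign, hxy.eq, neg_mul, add_neg_cancel]

section Resolution

variable {σ : Type*} {I : σ → σ → Prop}

theorem commute_gen_sub_one {a b : σ} (h : I a b) : Commute (gen I a - 1) (gen I b - 1) := by
  refine ((Commute.sub_right ?_ (Commute.one_right _)).sub_left (Commute.one_left _))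
  have : TraceMonoid.mk I (FreeMonoid.of a * FreeMonoid.of b)
      = TraceMonoid.mk I (FreeMonoid.of b * FreeMonoid.of a) :=
    Quotient.sound (ConGen.Rel.of _ _ ⟨a, b, h, rfl, rfl⟩)
  simp only [Commute, SemiconjBy, gen, ← map_mul, this]

theorem aug_add (x y : F I 0) : aug I (x + y) = aug I x + aug I y := by
  simp only [aug, Finsupp.add_apply, map_add]

variable [LinearOrder σ]

theorem elt_strictMono {k : ℕ} (c : Clique I k) : StrictMono (elt c) :=
  (Subtype.strictMono_coe _).comp (c.1.orderIsoOfFin c.2.1).strictMono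

theorem commute_gen_elt_sub_one {k : ℕ} (c : Clique I k) {i j : Fin k} (h : i ≠ j) :
    Commute (gen I (elt c i) - 1) (gen I (elt c j) - 1) :=
  commute_gen_sub_one (c.2.2 (elt_mem c i) (elt_mem c j) ((elt_strictMono c).injective.ne h))

theorem elt_erased {k : ℕ} (c : Clique I (k + 1)) (j : Fin (k + 1)) (i : Fin k) :
    elt (erased c j) i = elt c (j.succAbove i) := by
  have hmem : ∀ x, elt c (j.succAbove x) ∈ (erased c j).1 := fun x =>
    Finset.mem_erase.2 ⟨(elt_strictMono c).injective.ne (j.succAbove_ne x), elt_mem c _⟩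
  have hmono : StrictMono fun x => elt c (j.succAbove x) :=
    (elt_strictMono c).comp (Fin.strictMono_succAbove j)
  exact (Finset.coe_orderIsoOfFin_apply _ _ _).trans
    (congrFun (Finset.orderEmbOfFin_unique (erased c j).2.1 hmem hmono) i).symm

theorem erased_erased_succAbove_predAbove {k : ℕ} (c : Clique I (k + 2)) (j : Fin (k + 2))
    (i : Fin (k + 1)) :
    erased (erased c (j.succAbove i)) (i.predAbove j) = erased (erased c j) i := by
  refine Subtype.ext ?_
  change (c.1.erase _).erase _ = (c.1.erase _).erase _
  rw [elt_erased, elt_erased, Fin.succAbove_succAbove_predAbove, Finset.erase_right_comm]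

theorem del_single {k : ℕ} (c : Clique I (k + 1)) (r : RM σ I) :
    del I k (Finsupp.single c r) =
      ∑ j, Finsupp.single (erased c j) ((-1) ^ (j : ℕ) * (gen I (elt c j) - 1) * r) := by
  simp only [del, Finsupp.lsum_single, LinearMap.sum_apply, LinearMap.comp_apply,
    Finsupp.lsingle_apply, LinearMap.mulLeft_apply]

theorem del_comp_del (k : ℕ) : (del I k).comp (del I (k + 1)) = 0 := by
  refine Finsupp.lhom_ext fun c r => ?_
  simp only [LinearMap.comp_apply, LinearMap.zero_apply, del_single, map_sum]
  refine Fin.sum_sum_eq_zero_of_add_succAbove_predAbove_eq_zero _ fun j i => ?_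
  rw [erased_erased_succAbove_predAbove, ← Finsupp.single_add, elt_erased, elt_erased,
    Fin.succAbove_succAbove_predAbove,
    neg_one_pow_mul_mul_add_eq_zero (commute_gen_elt_sub_one c (j.succAbove_ne i))
      (Fin.neg_one_pow_succAbove_add_predAbove j i), Finsupp.single_zero]

theorem aug_del_single_zero (c : Clique I 1) (r : RM σ I) :
    aug I (del I 0 (Finsupp.single c r)) = 0 := by
  have hempty : erased c 0 = emptyClique I := Subtype.ext (Finset.card_eq_zero.1 (erased c 0).2.1)
  simp [del_single, aug, hempty, gen]

theorem aug_del_zero (x : F I 1) : aug I (del I 0 x) = 0 := by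
  induction x using Finsupp.induction_linear with
  | zero => simp [aug]
  | add x y hx hy => rw [map_add, aug_add, hx, hy, add_zero]
  | single c r => exact aug_del_single_zero c r

end Resolution

theorem resolution_is_complex_general {σ : Type*} [LinearOrder σ] (I : σ → σ → Prop) :
    (∀ k : ℕ, (del I k).comp (del I (k + 1)) = 0) ∧
      ∀ x : F I 1, aug I (del I 0 x) = 0 :=
  ⟨del_comp_del, aug_del_zero⟩

/-- For a free partially commutative monoid `M = M(Σ, I)` with `Σ` finite and totally
ordered, the maps `δ_k` together with the augmentation `ε` form a chain complex:
`δ_{k-1} ∘ δ_k = 0` for every `k ≥ 2`, and `ε ∘ δ₁ = 0`. -/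
theorem resolution_is_complex {σ : Type*} [Fintype σ] [LinearOrder σ] (I : σ → σ → Prop)
    (hsym : Symmetric I) (hirr : Irreflexive I) :
    (∀ k : ℕ, (del I k).comp (del I (k + 1)) = 0) ∧
      ∀ x : F I 1, aug I (del I 0 x) = 0 :=
  resolution_is_complex_general I
end
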